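/- arXiv:1811.12694 — 2 statements merged into one kernel-verified Lean document; each statement's English description precedes it below -/
import Mathlib

section
/- (Karlsson Lemma) Let X be a locally finite, infinite, connected graph with basepoint b, let f be a Floyd function, and let ε, C > 0. Then there exists a finite set K of vertices of X such that every C-quasi-geodesic edge path in X that does not intersect K has Floyd length less than ε. -/
open Filter
open scoped ENNReal

universe u

namespace FloydPaper

/-- A **Floyd function**: `f : {1,2,...} → (0,∞)` (modelled as `f : ℕ → ℝ` with `f 0 := f 1`)
such that there is `K ≥ 1` with `1 ≤ f n / f (n+1) ≤ K` for all `n ≥ 1`, and `∑ f n < ∞`. -/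
structure IsFloydFunction (f : ℕ → ℝ) : Prop where
  pos : ∀ n : ℕ, 0 < f n
  zero_eq : f 0 = f 1
  ratio : ∃ K : ℝ, 1 ≤ K ∧ ∀ n : ℕ, 1 ≤ n → 1 ≤ f n / f (n + 1) ∧ f n / f (n + 1) ≤ K
  summable : Summable fun n : ℕ => f (n + 1)

variable {V : Type u}

/-- The Floyd length of an (oriented) edge: `f` applied to the graph distance from the
basepoint `b` to the nearer endpoint of the edge. -/
noncomputable def edgeFloydLength (G : SimpleGraph V) (f : ℕ → ℝ) (b : V) (e : G.Dart) : ℝ :=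
  f (min (G.dist b e.toProd.1) (G.dist b e.toProd.2))

/-- The Floyd length of an edge path (walk): the sum of the Floyd lengths of its edges. -/
noncomputable def floydLength (G : SimpleGraph V) (f : ℕ → ℝ) (b : V) {u v : V}
    (p : G.Walk u v) : ℝ :=
  (p.darts.map (edgeFloydLength G f b)).sum

/-- The Floyd distance between two vertices: the infimum of the Floyd lengths of edge paths
joining them. -/
noncomputable def floydDist (G : SimpleGraph V) (f : ℕ → ℝ) (b : V) (u v : V) : ℝ :=
  sInf {L : ℝ | ∃ p : G.Walk u v, floydLength G f b p = L}

/-- An edge path `p` is a `C`-quasi-geodesic if for all vertices `v, v'` on `p`,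
`(1/C) d(v,v') - C ≤ |p(v,v')| ≤ C d(v,v') + C`, where `|p(v,v')|` is the number of edges of
the subpath of `p` between them. -/
def IsQuasiGeodesicWalk (G : SimpleGraph V) (C : ℝ) {u v : V} (p : G.Walk u v) : Prop :=
  ∀ i j : ℕ, i ≤ j → j ≤ p.length →
    (1 / C) * (G.dist (p.getVert i) (p.getVert j) : ℝ) - C ≤ ((j : ℝ) - (i : ℝ)) ∧
      ((j : ℝ) - (i : ℝ)) ≤ C * (G.dist (p.getVert i) (p.getVert j) : ℝ) + C

/-- A sequence of vertices escapes to infinity if it eventually leaves every ball about the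
basepoint. -/
def Escapes (G : SimpleGraph V) (b : V) (s : ℕ → V) : Prop :=
  ∀ n : ℕ, ∃ N : ℕ, ∀ m : ℕ, N ≤ m → n < G.dist b (s m)

/-- A sequence of vertices is Cauchy for the Floyd distance. -/
def IsFloydCauchy (G : SimpleGraph V) (f : ℕ → ℝ) (b : V) (s : ℕ → V) : Prop :=
  ∀ ε : ℝ, 0 < ε → ∃ N : ℕ, ∀ m n : ℕ, N ≤ m → N ≤ n →
    floydDist G f b (s m) (s n) < ε

/-- The sequences representing points of the Floyd boundary: Floyd-Cauchy sequences escaping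
to infinity (for an infinite, connected, locally finite graph these are exactly the Cauchy
sequences with no limit in the vertex set, since vertices are isolated in the Floyd metric). -/
def BoundarySeq (G : SimpleGraph V) (f : ℕ → ℝ) (b : V) : Type u :=
  {s : ℕ → V // IsFloydCauchy G f b s ∧ Escapes G b s}

/-- Two boundary sequences represent the same boundary point iff the Floyd distance between
them tends to `0`. -/
def BoundaryRel (G : SimpleGraph V) (f : ℕ → ℝ) (b : V)
    (s t : BoundarySeq G f b) : Prop :=
  Tendsto (fun n => floydDist G f b (s.1 n) (t.1 n)) atTop (nhds 0)

/-- The Floyd boundary `∂_f X`: the set of points of the Cauchy completion of the vertex set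
with the Floyd metric which do not lie in the vertex set. -/
def FloydBoundary (G : SimpleGraph V) (f : ℕ → ℝ) (b : V) : Type u :=
  Quot (BoundaryRel G f b)

/-- The Floyd boundary consists of exactly one point. -/
def FloydBoundaryOnePoint (G : SimpleGraph V) (f : ℕ → ℝ) (b : V) : Prop :=
  ∃ p : FloydBoundary G f b, ∀ q : FloydBoundary G f b, q = p

/-- The Floyd boundary is trivial: it has at most two points. -/
def FloydBoundaryTrivial (G : SimpleGraph V) (f : ℕ → ℝ) (b : V) : Prop :=
  ∀ p q r : FloydBoundary G f b, p = q ∨ p = r ∨ q = r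

/-- The divergence function `Div_{X,γ,δ}(n)` of a graph: the sup over triples `x, y, c` of
vertices with `r := d(c,{x,y}) > 0` and `d(x,y) ≤ n` of the infimum of the lengths of edge
paths from `x` to `y` avoiding the ball of radius `δr - γ` about `c` (`∞` if none exists). -/
noncomputable def graphDivergence (G : SimpleGraph V) (γ δ : ℝ) (n : ℕ) : ℝ≥0∞ :=
  ⨆ x : V, ⨆ y : V, ⨆ c : V,
    ⨆ _ : 0 < min (G.dist c x) (G.dist c y) ∧ G.dist x y ≤ n,
      ⨅ p : {p : G.Walk x y // ∀ z ∈ p.support,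
          δ * (↑(min (G.dist c x) (G.dist c y)) : ℝ) - γ < (G.dist c z : ℝ)},
        (p.1.length : ℝ≥0∞)

/-- `α : ℝ → X` is a (bi-infinite) `C`-quasi-geodesic for the distance function `d`. -/
def IsQuasiGeodesicMap {X : Type u} (d : X → X → ℝ) (C : ℝ) (α : ℝ → X) : Prop :=
  ∀ s t : ℝ, (1 / C) * |s - t| - C ≤ d (α s) (α t) ∧ d (α s) (α t) ≤ C * |s - t| + C

/-- `α : [0,∞) → X` is a `C`-quasi-geodesic ray for the distance function `d`. -/
def IsQuasiGeodesicRay {X : Type u} (d : X → X → ℝ) (C : ℝ) (α : ℝ → X) : Prop :=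
  ∀ s t : ℝ, 0 ≤ s → 0 ≤ t →
    (1 / C) * |s - t| - C ≤ d (α s) (α t) ∧ d (α s) (α t) ≤ C * |s - t| + C

/-- The length of a discrete path (chain) in a space with distance function `d`. -/
noncomputable def chainLength {X : Type u} (d : X → X → ℝ) (p : List X) : ℝ :=
  ((p.zip p.tail).map fun q => d q.1 q.2).sum

/-- The divergence function of a metric space (with distance function `d`), where paths are
taken to be discrete paths with steps of size at most `1` (for a graph these correspond to
edge paths). -/
noncomputable def divergence {X : Type u} (d : X → X → ℝ) (γ δ : ℝ) (n : ℕ) : ℝ≥0∞ :=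
  ⨆ x : X, ⨆ y : X, ⨆ c : X,
    ⨆ _ : 0 < min (d c x) (d c y) ∧ d x y ≤ (n : ℝ),
      ⨅ p : {p : List X // p.Chain' (fun w z => d w z ≤ 1) ∧ p.head? = some x ∧
          p.getLast? = some y ∧ ∀ z ∈ p, δ * min (d c x) (d c y) - γ < d c z},
        ENNReal.ofReal (chainLength d p.1)

/-- A space is `C`-wide if every point is within `C` of a bi-infinite `C`-quasi-geodesic and
its divergence is bounded above by a linear function for some `0 < δ < 1`, `γ ≥ 0`. -/
def IsWide (X : Type u) (d : X → X → ℝ) (C : ℝ) : Prop :=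
  (∀ x : X, ∃ α : ℝ → X, IsQuasiGeodesicMap d C α ∧ ∃ t : ℝ, d x (α t) ≤ C) ∧
  ∃ δ γ : ℝ, 0 < δ ∧ δ < 1 ∧ 0 ≤ γ ∧
    ∃ A B : ℝ, ∀ n : ℕ, divergence d γ δ n ≤ ENNReal.ofReal (A * n + B)

/-- The induced distance function on a subset. -/
def restrictDist {X : Type u} (d : X → X → ℝ) (Y : Set X) : ↥Y → ↥Y → ℝ :=
  fun a b => d a b

/-- A subset has infinite diameter. -/
def InfiniteDiam {X : Type u} (d : X → X → ℝ) (S : Set X) : Prop :=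
  ∀ M : ℝ, ∃ x ∈ S, ∃ y ∈ S, M < d x y

/-- `X` is `C`-thick of order at most `k`: thick of order `0` means wide, and thick of order
at most `k+1` means there is a collection `𝒴` of subsets whose `C`-neighborhoods cover `X`,
each of which is `C`-thick of order at most `k` in the induced metric, and any two of which
are connected by a finite chain of members of `𝒴` with consecutive ones having
infinite-diameter intersection `N_C(Y_i) ∩ Y_{i+1}`. -/
def IsThickLE : ℕ → (X : Type u) → (X → X → ℝ) → ℝ → Prop
  | 0, X, d, C => IsWide X d C
  | k + 1, X, d, C =>
      ∃ 𝒴 : Set (Set X),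
        (∀ x : X, ∃ Y ∈ 𝒴, ∃ y ∈ Y, d x y ≤ C) ∧
        (∀ Y ∈ 𝒴, IsThickLE k ↥Y (restrictDist d Y) C) ∧
        ∀ Y ∈ 𝒴, ∀ Y' ∈ 𝒴, ∃ m : ℕ, ∃ c : Fin (m + 1) → Set X,
          (∀ i, c i ∈ 𝒴) ∧ c 0 = Y ∧ c (Fin.last m) = Y' ∧
          ∀ i : Fin m, InfiniteDiam d
            ({x : X | ∃ y ∈ c i.castSucc, d x y ≤ C} ∩ c i.succ)

/-- `X` is `C`-thick of order at most `k ≥ 1` **with respect to** the collection `𝒴`. -/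
def IsThickCollection (X : Type u) (d : X → X → ℝ) (C : ℝ) (k : ℕ) (𝒴 : Set (Set X)) : Prop :=
  (∀ x : X, ∃ Y ∈ 𝒴, ∃ y ∈ Y, d x y ≤ C) ∧
  (∀ Y ∈ 𝒴, IsThickLE (k - 1) ↥Y (restrictDist d Y) C) ∧
  ∀ Y ∈ 𝒴, ∀ Y' ∈ 𝒴, ∃ m : ℕ, ∃ c : Fin (m + 1) → Set X,
    (∀ i, c i ∈ 𝒴) ∧ c 0 = Y ∧ c (Fin.last m) = Y' ∧
    ∀ i : Fin m, InfiniteDiam d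
      ({x : X | ∃ y ∈ c i.castSucc, d x y ≤ C} ∩ c i.succ)

/-- The path metric of a graph, as a real-valued distance function on the vertices. -/
noncomputable def graphDist (G : SimpleGraph V) : V → V → ℝ :=
  fun x y => (G.dist x y : ℝ)

/-- The Cayley graph of a group with respect to a generating set `S`: vertices are group
elements, with an edge joining `g` and `g * s` for each `g` and each `s ∈ S \ {1}`. -/
def cayleyGraph (Γ : Type u) [Group Γ] (S : Set Γ) : SimpleGraph Γ :=
  SimpleGraph.fromRel fun g h => ∃ s ∈ S, h = g * s

section KarlssonAux

variable {V : Type u}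

lemma IsFloydFunction.anti {f : ℕ → ℝ} (hf : IsFloydFunction f) : Antitone f := by
  apply antitone_nat_of_succ_le
  intro n
  cases n with
  | zero => rw [hf.zero_eq]
  | succ n =>
    obtain ⟨K, hK, hr⟩ := hf.ratio
    have h1 := (hr (n + 1) (Nat.le_add_left 1 n)).1
    have hp := hf.pos (n + 2)
    rw [le_div_iff₀ hp, one_mul] at h1
    exact h1

lemma IsFloydFunction.summable' {f : ℕ → ℝ} (hf : IsFloydFunction f) : Summable f :=
  (summable_nat_add_iff 1).1 hf.summable

/-- In a connected graph, a non-trivial walk from `x` to `y` gives a vertex adjacent to `y`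
which is strictly closer to `x` (in terms of the length of the walk). -/
lemma exists_adj_of_walk {G : SimpleGraph V} (hconn : G.Connected) {x y : V}
    (p : G.Walk x y) (hp : p.length ≠ 0) :
    ∃ w, G.Adj w y ∧ G.dist x w + 1 ≤ p.length := by
  induction p with
  | nil => simp at hp
  | @cons x v y h q ih =>
    by_cases hq : q.length = 0
    · have hv : v = y := SimpleGraph.Walk.eq_of_length_eq_zero hq
      subst hv
      refine ⟨x, h, ?_⟩
      simp [SimpleGraph.dist_self]
    · obtain ⟨w, hw, hd⟩ := ih hq
      refine ⟨w, hw, ?_⟩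
      have h1 : G.dist x v ≤ 1 := by
        have := SimpleGraph.dist_le (SimpleGraph.Walk.cons h (SimpleGraph.Walk.nil))
        simpa using this
      have htri : G.dist x w ≤ G.dist x v + G.dist v w := hconn.dist_triangle
      have : q.length + 1 = (SimpleGraph.Walk.cons h q).length := by simp
      omega

/-- Balls in a connected locally finite graph are finite. -/
lemma ball_finite (G : SimpleGraph V) (hconn : G.Connected)
    (hlf : ∀ v : V, (G.neighborSet v).Finite) (b : V) (n : ℕ) :
    {v : V | G.dist b v ≤ n}.Finite := by
  induction n with
  | zero =>
    apply Set.Finite.subset (Set.finite_singleton b)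
    intro v hv
    simp only [Set.mem_setOf_eq, Nat.le_zero] at hv
    have := (hconn.dist_eq_zero_iff).mp hv
    simp [this]
  | succ n ih =>
    apply Set.Finite.subset (ih.union (Set.Finite.biUnion ih (fun w _ => hlf w)))
    intro v hv
    simp only [Set.mem_setOf_eq] at hv
    by_cases h : G.dist b v ≤ n
    · exact Or.inl h
    · right
      have hne : G.dist b v ≠ 0 := by omega
      obtain ⟨p, hp⟩ := SimpleGraph.exists_walk_of_dist_ne_zero hne
      obtain ⟨w, hw, hd⟩ := exists_adj_of_walk hconn p (by omega)
      rw [hp] at hd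
      refine Set.mem_biUnion (show w ∈ {v : V | G.dist b v ≤ n} by
        simp only [Set.mem_setOf_eq]; omega) ?_
      simp only [SimpleGraph.mem_neighborSet]
      exact hw

/-- The Floyd length of a walk is at most the sum over its edges of the values of `f` at the
distances of the two endpoints from the basepoint. -/
lemma floydLength_le_sum (G : SimpleGraph V) (f : ℕ → ℝ) (hpos : ∀ n, 0 < f n) (b : V) :
    ∀ {u v : V} (p : G.Walk u v),
    floydLength G f b p ≤ ∑ k ∈ Finset.range p.length,
      (f (G.dist b (p.getVert k)) + f (G.dist b (p.getVert (k + 1)))) := by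
  intro u v p
  induction p with
  | nil => simp [floydLength]
  | @cons u w v h q ih =>
    have hlen : (SimpleGraph.Walk.cons h q).length = q.length + 1 := by simp
    rw [hlen, Finset.sum_range_succ']
    simp only [SimpleGraph.Walk.getVert_cons_succ, SimpleGraph.Walk.getVert_zero]
    have hfl : floydLength G f b (SimpleGraph.Walk.cons h q)
        = f (min (G.dist b u) (G.dist b w)) + floydLength G f b q := by
      simp [floydLength, SimpleGraph.Walk.darts_cons, edgeFloydLength]
    rw [hfl]
    have hmin : f (min (G.dist b u) (G.dist b w)) ≤ f (G.dist b u) + f (G.dist b w) := by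
      rcases le_total (G.dist b u) (G.dist b w) with hle | hle
      · rw [min_eq_left hle]; linarith [(hpos (G.dist b w))]
      · rw [min_eq_right hle]; linarith [(hpos (G.dist b u))]
    linarith [ih, hmin]

/-- The key counting estimate: the sum of `f ((Nat.dist i m + 2cr)/(4c))` over `i ≤ L` is
bounded by `8c` times the tail sum of `f` from `r/2`. -/
lemma sum_f_div_le (f : ℕ → ℝ) (hpos : ∀ n, 0 < f n) (hsum : Summable f)
    (c r m L : ℕ) (hc : 1 ≤ c) :
    ∑ i ∈ Finset.range (L + 1), f ((Nat.dist i m + 2 * c * r) / (4 * c))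
      ≤ (8 * (c : ℝ)) * ∑' k, f (k + r / 2) := by
  classical
  set r2 := r / 2 with hr2
  set N : ℕ → ℕ := fun i => (Nat.dist i m + 2 * c * r) / (4 * c) with hNdef
  have h4c : 0 < 4 * c := by omega
  set s : Finset ℕ := Finset.range (L + 1) with hs
  -- step 1: fiber decomposition
  rw [show ∑ i ∈ s, f (N i) = ∑ v ∈ s.image N, ({i ∈ s | N i = v}).card • f v from
    Finset.sum_comp f N]
  -- step 2: each fiber has at most 8c elements
  have hcard : ∀ v ∈ s.image N, ({i ∈ s | N i = v}).card ≤ 8 * c := by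
    intro v _
    have hmaps : ∀ i ∈ ({i ∈ s | N i = v} : Finset ℕ),
        Nat.dist i m + 2 * c * r ∈ Finset.Ico (4 * c * v) (4 * c * v + 4 * c) := by
      intro i hi
      simp only [Finset.mem_filter] at hi
      have hiv : N i = v := hi.2
      rw [Finset.mem_Ico]
      constructor
      · have h1 : v ≤ (Nat.dist i m + 2 * c * r) / (4 * c) := le_of_eq hiv.symm
        have h2 := (Nat.le_div_iff_mul_le h4c).1 h1
        calc 4 * c * v = v * (4 * c) := by ring
          _ ≤ _ := h2
      · have hiv' : (Nat.dist i m + 2 * c * r) / (4 * c) = v := hiv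
        have h1 : (Nat.dist i m + 2 * c * r) / (4 * c) < v + 1 := by omega
        have h2 := (Nat.div_lt_iff_lt_mul h4c).1 h1
        have e : (v + 1) * (4 * c) = 4 * c * v + 4 * c := by ring
        rw [e] at h2
        exact h2
    have hfib : ∀ j ∈ Finset.Ico (4 * c * v) (4 * c * v + 4 * c),
        ({i ∈ ({i ∈ s | N i = v} : Finset ℕ) | Nat.dist i m + 2 * c * r = j}).card ≤ 2 := by
      intro j _
      have hsub : ({i ∈ ({i ∈ s | N i = v} : Finset ℕ) | Nat.dist i m + 2 * c * r = j})
          ⊆ ({m + (j - 2 * c * r), m - (j - 2 * c * r)} : Finset ℕ) := by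
        intro i hi
        simp only [Finset.mem_filter] at hi
        have hd := hi.2
        simp only [Finset.mem_insert, Finset.mem_singleton]
        obtain ⟨A, hA⟩ : ∃ A, 2 * c * r = A := ⟨_, rfl⟩
        rw [hA] at hd ⊢
        rcases le_total i m with hle | hle
        · have : Nat.dist i m = m - i := Nat.dist_eq_sub_of_le hle
          omega
        · have : Nat.dist i m = i - m := Nat.dist_eq_sub_of_le_right hle
          omega
      calc _ ≤ ({m + (j - 2 * c * r), m - (j - 2 * c * r)} : Finset ℕ).card :=
            Finset.card_le_card hsub
        _ ≤ 2 := by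
            apply le_trans (Finset.card_insert_le _ _)
            simp
    have := Finset.card_le_mul_card_image_of_maps_to hmaps 2 hfib
    rw [Nat.card_Ico] at this
    omega
  -- step 3: bound by 8c times the sum over the image
  have hstep3 : ∑ v ∈ s.image N, ({i ∈ s | N i = v}).card • f v
      ≤ (8 * (c : ℝ)) * ∑ v ∈ s.image N, f v := by
    rw [Finset.mul_sum]
    apply Finset.sum_le_sum
    intro v hv
    rw [nsmul_eq_mul]
    apply mul_le_mul_of_nonneg_right _ (hpos v).le
    have := hcard v hv
    calc (({i ∈ s | N i = v}).card : ℝ) ≤ ((8 * c : ℕ) : ℝ) := by exact_mod_cast this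
      _ = 8 * (c : ℝ) := by push_cast; ring
  -- step 4: the image consists of naturals ≥ r/2, so its sum is at most the tail sum
  have himg : ∀ v ∈ s.image N, r2 ≤ v := by
    intro v hv
    rw [Finset.mem_image] at hv
    obtain ⟨i, _, hiv⟩ := hv
    have h1 : 2 * c * r / (4 * c) ≤ N i :=
      Nat.div_le_div_right (Nat.le_add_left _ _)
    have h2 : 2 * c * r / (4 * c) = r / 2 := by
      have e1 : 2 * c * r = 2 * c * r := rfl
      have e2 : 4 * c = 2 * c * 2 := by ring
      rw [e2]
      exact Nat.mul_div_mul_left r 2 (by omega)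
    rw [h2] at h1
    rw [hr2, ← hiv]
    exact h1
  have hsub : Summable (fun k => f (k + r2)) := (summable_nat_add_iff r2).2 hsum
  have hstep4 : ∑ v ∈ s.image N, f v ≤ ∑' k, f (k + r2) := by
    have hinj : ∀ x ∈ s.image N, ∀ y ∈ s.image N, x - r2 = y - r2 → x = y := by
      intro x hx y hy hxy
      have := himg x hx
      have := himg y hy
      omega
    have he : ∑ w ∈ (s.image N).image (· - r2), f (w + r2) = ∑ v ∈ s.image N, f (v - r2 + r2) :=
      Finset.sum_image hinj
    have he2 : ∑ v ∈ s.image N, f (v - r2 + r2) = ∑ v ∈ s.image N, f v := by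
      apply Finset.sum_congr rfl
      intro v hv
      congr 1
      exact Nat.sub_add_cancel (himg v hv)
    rw [← he2, ← he]
    exact Summable.sum_le_tsum _ (fun w _ => (hpos _).le) hsub
  calc ∑ v ∈ s.image N, ({i ∈ s | N i = v}).card • f v
      ≤ (8 * (c : ℝ)) * ∑ v ∈ s.image N, f v := hstep3
    _ ≤ (8 * (c : ℝ)) * ∑' k, f (k + r2) := by
        apply mul_le_mul_of_nonneg_left hstep4
        positivity

end KarlssonAux

/-- **Karlsson Lemma.** Let `X` be a locally finite, infinite, connected graph with basepoint
`b`, let `f` be a Floyd function, and let `ε, C > 0`. Then there is a finite set `K` of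
vertices such that every `C`-quasi-geodesic edge path avoiding `K` has Floyd length less
than `ε`. -/
theorem karlsson_lemma
    {V : Type u} (G : SimpleGraph V) (hinf : Infinite V) (hconn : G.Connected)
    (hlf : ∀ v : V, (G.neighborSet v).Finite)
    (b : V) (f : ℕ → ℝ) (hf : IsFloydFunction f)
    (ε C : ℝ) (hε : 0 < ε) (hC : 0 < C) :
    ∃ K : Set V, K.Finite ∧ ∀ (u v : V) (p : G.Walk u v),
      IsQuasiGeodesicWalk G C p → (∀ x ∈ p.support, x ∉ K) →
      floydLength G f b p < ε := by
  have hanti : Antitone f := hf.anti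
  have hpos := hf.pos
  have hsum : Summable f := hf.summable'
  set c : ℕ := ⌈C⌉₊ with hcdef
  have hc1 : 1 ≤ c := Nat.one_le_ceil_iff.2 hC
  have hCc : C ≤ (c : ℝ) := Nat.le_ceil C
  have hc0 : (0 : ℝ) < (c : ℝ) := by exact_mod_cast hc1
  have hεc : 0 < ε / (16 * (c : ℝ)) := div_pos hε (by linarith)
  obtain ⟨N, hN⟩ : ∃ N : ℕ, ∀ n, N ≤ n → ∑' k, f (k + n) < ε / (16 * (c : ℝ)) := by
    have ht := tendsto_sum_nat_add f
    have := ht.eventually (gt_mem_nhds hεc)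
    exact Filter.eventually_atTop.1 this
  refine ⟨{v : V | G.dist b v ≤ 2 * N + 1}, ball_finite G hconn hlf b _, ?_⟩
  intro u v p hqg havoid
  set L := p.length with hL
  set D : ℕ → ℕ := fun i => G.dist b (p.getVert i) with hD
  have hDlarge : ∀ i, i ≤ L → 2 * N + 1 < D i := by
    intro i hi
    have hmem : p.getVert i ∈ p.support :=
      SimpleGraph.Walk.mem_support_iff_exists_getVert.2 ⟨i, rfl, hi⟩
    have := havoid _ hmem
    simp only [Set.mem_setOf_eq] at this
    simp only [hD]
    omega
  obtain ⟨m, hmmem, hmmin⟩ := Finset.exists_min_image (Finset.range (L + 1)) D ⟨0, by simp⟩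
  have hmL : m ≤ L := by
    have := Finset.mem_range.1 hmmem
    omega
  set r := D m with hr
  have hrN : 2 * N + 2 ≤ r := by
    have := hDlarge m hmL
    omega
  -- the natural-number quasi-geodesic inequality
  have hq : ∀ i j, i ≤ j → j ≤ L →
      j - i ≤ c * G.dist (p.getVert i) (p.getVert j) + c := by
    intro i j hij hjL
    have h2 := (hqg i j hij hjL).2
    have hd0 : (0 : ℝ) ≤ (G.dist (p.getVert i) (p.getVert j) : ℝ) := Nat.cast_nonneg _
    have hcast : ((j - i : ℕ) : ℝ) ≤ (c : ℝ) * (G.dist (p.getVert i) (p.getVert j) : ℝ)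
        + (c : ℝ) := by
      rw [Nat.cast_sub hij]
      calc (j : ℝ) - (i : ℝ) ≤ C * (G.dist (p.getVert i) (p.getVert j) : ℝ) + C := h2
        _ ≤ (c : ℝ) * (G.dist (p.getVert i) (p.getVert j) : ℝ) + (c : ℝ) :=
            add_le_add (mul_le_mul_of_nonneg_right hCc hd0) hCc
    exact_mod_cast hcast
  -- key estimate : the "level" of each vertex is below its distance to the basepoint
  have hkey : ∀ i, i ≤ L → (Nat.dist i m + 2 * c * r) / (4 * c) ≤ D i := by
    intro i hi
    have hrDi : r ≤ D i := hmmin i (Finset.mem_range.2 (by omega))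
    have hdist : Nat.dist i m ≤ 2 * c * D i + c := by
      rcases le_total i m with hle | hle
      · have h1 : m - i ≤ c * G.dist (p.getVert i) (p.getVert m) + c := hq i m hle hmL
        have htri : G.dist (p.getVert i) (p.getVert m) ≤ D i + r := by
          calc G.dist (p.getVert i) (p.getVert m)
              ≤ G.dist (p.getVert i) b + G.dist b (p.getVert m) := hconn.dist_triangle
            _ = D i + r := by rw [SimpleGraph.dist_comm]
        have h3 : c * G.dist (p.getVert i) (p.getVert m) ≤ c * (D i + D i) :=
          Nat.mul_le_mul_left c (le_trans htri (by omega))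
        calc Nat.dist i m = m - i := Nat.dist_eq_sub_of_le hle
          _ ≤ c * G.dist (p.getVert i) (p.getVert m) + c := h1
          _ ≤ c * (D i + D i) + c := Nat.add_le_add_right h3 c
          _ = 2 * c * D i + c := by ring
      · have h1 : i - m ≤ c * G.dist (p.getVert m) (p.getVert i) + c := hq m i hle hi
        have htri : G.dist (p.getVert m) (p.getVert i) ≤ r + D i := by
          calc G.dist (p.getVert m) (p.getVert i)
              ≤ G.dist (p.getVert m) b + G.dist b (p.getVert i) := hconn.dist_triangle
            _ = r + D i := by rw [SimpleGraph.dist_comm]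
        have h3 : c * G.dist (p.getVert m) (p.getVert i) ≤ c * (D i + D i) :=
          Nat.mul_le_mul_left c (le_trans htri (by omega))
        calc Nat.dist i m = i - m := Nat.dist_eq_sub_of_le_right hle
          _ ≤ c * G.dist (p.getVert m) (p.getVert i) + c := h1
          _ ≤ c * (D i + D i) + c := Nat.add_le_add_right h3 c
          _ = 2 * c * D i + c := by ring
    have h2cr : 2 * c * r ≤ 2 * c * D i := Nat.mul_le_mul_left _ hrDi
    have hsum4 : Nat.dist i m + 2 * c * r ≤ 4 * c * D i + c := by
      have hadd := Nat.add_le_add hdist h2cr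
      have e : 2 * c * D i + c + 2 * c * D i = 4 * c * D i + c := by ring
      rw [e] at hadd
      exact hadd
    have hlt : (Nat.dist i m + 2 * c * r) / (4 * c) < D i + 1 := by
      apply (Nat.div_lt_iff_lt_mul (by omega)).2
      have e2 : (D i + 1) * (4 * c) = 4 * c * D i + 4 * c := by ring
      rw [e2]
      obtain ⟨X, hX⟩ : ∃ X, 4 * c * D i = X := ⟨_, rfl⟩
      obtain ⟨Y, hY⟩ : ∃ Y, 2 * c * r = Y := ⟨_, rfl⟩
      rw [hX, hY] at hsum4 ⊢
      omega
    omega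
  -- now assemble the estimate
  have h1 : floydLength G f b p ≤ ∑ k ∈ Finset.range L, (f (D k) + f (D (k + 1))) :=
    floydLength_le_sum G f hpos b p
  have h2 : ∑ k ∈ Finset.range L, (f (D k) + f (D (k + 1)))
      = ∑ k ∈ Finset.range L, f (D k) + ∑ k ∈ Finset.range L, f (D (k + 1)) :=
    Finset.sum_add_distrib
  have h3 : ∑ k ∈ Finset.range L, f (D k) ≤ ∑ i ∈ Finset.range (L + 1), f (D i) :=
    Finset.sum_le_sum_of_subset_of_nonneg (Finset.range_subset_range.2 (by omega))
      (fun i _ _ => (hpos _).le)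
  have h4 : ∑ k ∈ Finset.range L, f (D (k + 1)) ≤ ∑ i ∈ Finset.range (L + 1), f (D i) := by
    rw [Finset.sum_range_succ' (fun i => f (D i)) L]
    exact le_add_of_nonneg_right (hpos _).le
  have h5 : ∑ i ∈ Finset.range (L + 1), f (D i)
      ≤ ∑ i ∈ Finset.range (L + 1), f ((Nat.dist i m + 2 * c * r) / (4 * c)) := by
    apply Finset.sum_le_sum
    intro i hi
    exact hanti (hkey i (by have := Finset.mem_range.1 hi; omega))
  have h6 := sum_f_div_le f hpos hsum c r m L hc1
  have hr2 : N ≤ r / 2 := by omega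
  have h7 : ∑' k, f (k + r / 2) < ε / (16 * (c : ℝ)) := hN _ hr2
  have h16 : (0 : ℝ) < 16 * (c : ℝ) := by linarith
  have hfin : 2 * ((8 * (c : ℝ)) * ∑' k, f (k + r / 2)) < ε := by
    have hmul := mul_lt_mul_of_pos_left h7 h16
    rw [mul_comm (16 * (c : ℝ)) (ε / (16 * (c : ℝ))),
      div_mul_cancel₀ ε (ne_of_gt h16)] at hmul
    linarith
  linarith

end FloydPaper
end

section
/- Let X be a locally finite, infinite, connected graph with basepoint b, and let f and g be Floyd functions with g(n) ≤ f(n) for all n ≥ 1. Then for all vertices u, v of X the Floyd distances satisfy d_g(u,v) ≤ d_f(u,v); and if the Floyd boundary ∂_f X is trivial (consists of at most two points), then the Floyd boundary ∂_g X is trivial as well. -/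
open Filter
open scoped ENNReal

universe u

namespace FloydPaper

variable {V : Type u}

section Aux

open SimpleGraph

variable {G : SimpleGraph V} {f : ℕ → ℝ} {b : V}

lemma edgeFloydLength_symm (G : SimpleGraph V) (f : ℕ → ℝ) (b : V) (d : G.Dart) :
    edgeFloydLength G f b d.symm = edgeFloydLength G f b d := by
  simp [edgeFloydLength, Dart.symm, min_comm]

lemma floydLength_nonneg (hf : ∀ n, 0 < f n) {u v : V} (p : G.Walk u v) :
    0 ≤ floydLength G f b p := by
  apply List.sum_nonneg
  intro x hx
  obtain ⟨d, _, rfl⟩ := List.mem_map.mp hx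
  exact (hf _).le

lemma floydLength_nil {u : V} : floydLength G f b (Walk.nil : G.Walk u u) = 0 := by
  simp [floydLength]

lemma floydLength_append {u v w : V} (p : G.Walk u v) (q : G.Walk v w) :
    floydLength G f b (p.append q) = floydLength G f b p + floydLength G f b q := by
  simp [floydLength, Walk.darts_append]

lemma floydLength_reverse {u v : V} (p : G.Walk u v) :
    floydLength G f b p.reverse = floydLength G f b p := by
  simp only [floydLength, Walk.darts_reverse, List.map_reverse, List.sum_reverse,
    List.map_map]
  congr 1
  exact List.map_congr_left fun d _ => edgeFloydLength_symm G f b d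

lemma floydSet_nonempty (hconn : G.Connected) (u v : V) :
    {L : ℝ | ∃ p : G.Walk u v, floydLength G f b p = L}.Nonempty := by
  obtain ⟨p⟩ := hconn u v
  exact ⟨_, p, rfl⟩

lemma floydSet_bddBelow (hf : ∀ n, 0 < f n) (u v : V) :
    BddBelow {L : ℝ | ∃ p : G.Walk u v, floydLength G f b p = L} :=
  ⟨0, by rintro L ⟨p, rfl⟩; exact floydLength_nonneg hf p⟩

lemma floydDist_le (hf : ∀ n, 0 < f n) {u v : V} (p : G.Walk u v) :
    floydDist G f b u v ≤ floydLength G f b p :=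
  csInf_le (floydSet_bddBelow hf u v) ⟨p, rfl⟩

lemma floydDist_nonneg (hf : ∀ n, 0 < f n) (hconn : G.Connected) (u v : V) :
    0 ≤ floydDist G f b u v :=
  le_csInf (floydSet_nonempty hconn u v) (by rintro L ⟨p, rfl⟩; exact floydLength_nonneg hf p)

lemma floydDist_self (hf : ∀ n, 0 < f n) (u : V) : floydDist G f b u u = 0 := by
  refine le_antisymm ?_ ?_
  · simpa [floydLength_nil] using floydDist_le (b := b) hf (Walk.nil : G.Walk u u)
  · exact le_csInf ⟨0, Walk.nil, floydLength_nil⟩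
      (by rintro L ⟨p, rfl⟩; exact floydLength_nonneg hf p)

lemma floydDist_triangle (hf : ∀ n, 0 < f n) (hconn : G.Connected) (u v w : V) :
    floydDist G f b u w ≤ floydDist G f b u v + floydDist G f b v w := by
  have key : ∀ L1 ∈ {L : ℝ | ∃ p : G.Walk u v, floydLength G f b p = L},
      ∀ L2 ∈ {L : ℝ | ∃ p : G.Walk v w, floydLength G f b p = L},
      floydDist G f b u w ≤ L1 + L2 := by
    rintro _ ⟨p, rfl⟩ _ ⟨q, rfl⟩
    calc floydDist G f b u w ≤ floydLength G f b (p.append q) := floydDist_le hf _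
      _ = _ := floydLength_append p q
  have h2 : ∀ L1 ∈ {L : ℝ | ∃ p : G.Walk u v, floydLength G f b p = L},
      floydDist G f b u w - L1 ≤ floydDist G f b v w := fun L1 h1 =>
    le_csInf (floydSet_nonempty hconn v w) fun L2 hL2 => by linarith [key L1 h1 L2 hL2]
  have h3 : floydDist G f b u w - floydDist G f b v w ≤ floydDist G f b u v :=
    le_csInf (floydSet_nonempty hconn u v) fun L1 hL1 => by linarith [h2 L1 hL1]
  linarith

lemma floydDist_comm_le (hf : ∀ n, 0 < f n) (hconn : G.Connected) (u v : V) :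
    floydDist G f b u v ≤ floydDist G f b v u :=
  le_csInf (floydSet_nonempty hconn v u) <| by
    rintro L ⟨p, rfl⟩
    calc floydDist G f b u v ≤ floydLength G f b p.reverse := floydDist_le hf _
      _ = _ := floydLength_reverse p

lemma floydDist_comm (hf : ∀ n, 0 < f n) (hconn : G.Connected) (u v : V) :
    floydDist G f b u v = floydDist G f b v u :=
  le_antisymm (floydDist_comm_le hf hconn u v) (floydDist_comm_le hf hconn v u)

lemma floydDist_mono {g : ℕ → ℝ} (hg : ∀ n, 0 < g n) (hconn : G.Connected)
    (hle : ∀ n, g n ≤ f n) (u v : V) :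
    floydDist G g b u v ≤ floydDist G f b u v := by
  refine le_csInf (floydSet_nonempty hconn u v) ?_
  rintro L ⟨p, rfl⟩
  refine (floydDist_le hg p).trans ?_
  refine List.sum_le_sum ?_
  intro d _
  exact hle _

lemma floydDist_le_edge (hf : ∀ n, 0 < f n) {u v : V} (h : G.Adj u v) :
    floydDist G f b u v ≤ f (min (G.dist b u) (G.dist b v)) := by
  have := floydDist_le (b := b) hf (Walk.cons h Walk.nil)
  simpa [floydLength, edgeFloydLength] using this

lemma dist_getVert_le (hconn : G.Connected) {u v : V} (p : G.Walk u v) (i : ℕ) :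
    G.dist u (p.getVert i) ≤ i := by
  induction i with
  | zero => simp [Walk.getVert_zero]
  | succ i ih =>
    by_cases hi : i < p.length
    · calc G.dist u (p.getVert (i + 1))
          ≤ G.dist u (p.getVert i) + G.dist (p.getVert i) (p.getVert (i + 1)) :=
            hconn.dist_triangle
        _ ≤ i + 1 := by
            have : G.dist (p.getVert i) (p.getVert (i + 1)) = 1 :=
              SimpleGraph.dist_eq_one_iff_adj.mpr (p.adj_getVert_succ hi)
            omega
    · rw [p.getVert_of_length_le (by omega), ← p.getVert_of_length_le (le_of_not_gt hi)]
      exact ih.trans (by omega)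

lemma exists_pred (hconn : G.Connected) {v : V} {j : ℕ} (hv : G.dist b v = j + 1) :
    ∃ u : V, G.Adj u v ∧ G.dist b u = j := by
  obtain ⟨p, hp⟩ := hconn.exists_walk_length_eq_dist b v
  rw [hv] at hp
  refine ⟨p.getVert j, ?_, ?_⟩
  · have := p.adj_getVert_succ (by omega : j < p.length)
    rwa [show j + 1 = p.length by omega, p.getVert_length] at this
  · have h1 : G.dist b (p.getVert j) ≤ j := dist_getVert_le hconn p j
    have h2 : G.dist b v ≤ G.dist b (p.getVert j) + G.dist (p.getVert j) v :=
      hconn.dist_triangle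
    have h3 : G.dist (p.getVert j) v ≤ 1 := by
      have := p.adj_getVert_succ (by omega : j < p.length)
      rw [show j + 1 = p.length by omega, p.getVert_length] at this
      exact le_of_eq (SimpleGraph.dist_eq_one_iff_adj.mpr this)
    omega

lemma sphere_finite (hconn : G.Connected) (hlf : ∀ v : V, (G.neighborSet v).Finite)
    (n : ℕ) : {w : V | G.dist b w = n}.Finite := by
  induction n with
  | zero =>
    refine (Set.finite_singleton b).subset ?_
    intro w hw
    have := (hconn.dist_eq_zero_iff (u := b) (v := w)).mp hw
    simp [this.symm]
  | succ n ih =>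
    refine ((ih.biUnion fun u _ => hlf u).subset ?_)
    intro w hw
    obtain ⟨u, hadj, hu⟩ := exists_pred hconn hw
    exact Set.mem_biUnion hu hadj

lemma floyd_proj_aux (hf : ∀ n, 0 < f n) (hconn : G.Connected) :
    ∀ (j n : ℕ) (v : V), G.dist b v = n + j →
      ∃ w : V, G.dist b w = n ∧
        floydDist G f b v w ≤ ∑ k ∈ Finset.Ico n (n + j), f k := by
  intro j
  induction j with
  | zero =>
    intro n v hv
    exact ⟨v, by simpa using hv, by simp [floydDist_self hf]⟩
  | succ j ih =>
    intro n v hv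
    obtain ⟨u, hadj, hu⟩ := exists_pred hconn (show G.dist b v = (n + j) + 1 by omega)
    obtain ⟨w, hw1, hw2⟩ := ih n u hu
    refine ⟨w, hw1, ?_⟩
    have h1 : floydDist G f b v u ≤ f (n + j) := by
      have := floydDist_le_edge (b := b) hf hadj.symm
      rwa [hv, hu, show min (n + (j + 1)) (n + j) = n + j by omega] at this
    have h2 := floydDist_triangle hf hconn (b := b) v u w
    have h3 : ∑ k ∈ Finset.Ico n (n + j), f k + f (n + j)
        = ∑ k ∈ Finset.Ico n (n + (j + 1)), f k := by
      rw [show n + (j + 1) = (n + j) + 1 by omega,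
        Finset.sum_Ico_succ_top (by omega : n ≤ n + j)]
    linarith

lemma floyd_proj (hf : IsFloydFunction f) (hconn : G.Connected) {n : ℕ} {v : V}
    (h : n ≤ G.dist b v) :
    ∃ w : V, G.dist b w = n ∧ floydDist G f b v w ≤ ∑' k, f (n + k) := by
  have hsum : Summable f := (summable_nat_add_iff 1).mp hf.summable
  obtain ⟨w, hw1, hw2⟩ := floyd_proj_aux hf.pos hconn (G.dist b v - n) n v (show G.dist b v = n + (G.dist b v - n) by omega)
  refine ⟨w, hw1, hw2.trans ?_⟩
  rw [Finset.sum_Ico_eq_sum_range]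
  simp only [Nat.add_sub_cancel_left]
  exact Summable.sum_le_tsum (Finset.range _) (fun i _ => (hf.pos _).le)
    (((summable_nat_add_iff n).mpr hsum).congr fun i => by rw [Nat.add_comm])

lemma tendsto_zero_aux (a : ℕ → ℝ) (h0 : ∀ n, 0 ≤ a n)
    (h : ∀ ε : ℝ, 0 < ε → ∃ N, ∀ n, N ≤ n → a n < ε) :
    Tendsto a atTop (nhds 0) := by
  rw [Metric.tendsto_atTop]
  intro ε hε
  obtain ⟨N, hN⟩ := h ε hε
  exact ⟨N, fun n hn => by
    rw [Real.dist_eq, sub_zero, abs_of_nonneg (h0 n)]; exact hN n hn⟩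

/-- Every escaping sequence has a subsequence which is Floyd–Cauchy for `f`. -/
lemma exists_floydCauchy_subseq (hf : IsFloydFunction f) (hconn : G.Connected)
    (hlf : ∀ v : V, (G.neighborSet v).Finite) {s : ℕ → V} (hs : Escapes G b s) :
    ∃ φ : ℕ → ℕ, StrictMono φ ∧ IsFloydCauchy G f b (s ∘ φ) := by
  classical
  set T : ℕ → ℝ := fun n => ∑' k, f (n + k) with hT
  -- The refinement step.
  have step : ∀ (k : ℕ) (A : Set ℕ), A.Infinite →
      ∃ B : Set ℕ, B ⊆ A ∧ B.Infinite ∧ ∃ c : V, ∀ m ∈ B, floydDist G f b (s m) c ≤ T k := by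
    intro k A hA
    obtain ⟨N, hN⟩ := hs k
    set A' : Set ℕ := A \ {m | m < N} with hA'def
    have hA' : A'.Infinite := hA.diff (Set.finite_Iio N)
    have hdist : ∀ m ∈ A', k ≤ G.dist b (s m) := by
      intro m hm
      exact (hN m (by simpa using hm.2)).le
    -- choose projections to the sphere of radius k
    have hproj : ∀ m : A', ∃ w : {w : V // G.dist b w = k},
        floydDist G f b (s m) w ≤ T k := by
      rintro ⟨m, hm⟩
      obtain ⟨w, hw1, hw2⟩ := floyd_proj hf hconn (hdist m hm)
      exact ⟨⟨w, hw1⟩, hw2⟩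
    choose F hF using hproj
    haveI : Infinite A' := Set.infinite_coe_iff.mpr hA'
    haveI : Finite {w : V // G.dist b w = k} :=
      Set.finite_coe_iff.mpr (sphere_finite hconn hlf k)
    obtain ⟨c, hc⟩ := Finite.exists_infinite_fiber F
    refine ⟨Subtype.val '' (F ⁻¹' {c}), ?_, ?_, c, ?_⟩
    · rintro m ⟨⟨m', hm'⟩, _, rfl⟩
      exact hm'.1
    · exact (Set.infinite_coe_iff.mp (by simpa using hc)).image
        (Set.injOn_of_injective Subtype.val_injective)
    · rintro m ⟨⟨m', hm'⟩, hfib, rfl⟩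
      have : F ⟨m', hm'⟩ = c := hfib
      have := hF ⟨m', hm'⟩
      rw [hfib] at this
      exact this
  choose B hBsub hBinf c hc using step
  -- build the nested chain of infinite sets
  let A : ℕ → {S : Set ℕ // S.Infinite} := fun k =>
    Nat.rec ⟨B 0 Set.univ Set.infinite_univ, hBinf 0 _ _⟩
      (fun k ih => ⟨B (k + 1) ih.1 ih.2, hBinf _ _ _⟩) k
  have hAsucc : ∀ k, (A (k + 1)).1 ⊆ (A k).1 := fun k => hBsub _ _ _
  have hAc : ∀ k, ∀ m ∈ (A k).1, floydDist G f b (s m) (c k (A k).1 (A k).2) ≤ T k ∨ True :=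
    fun k m hm => Or.inr trivial
  have hAc0 : ∀ m ∈ (A 0).1, floydDist G f b (s m) (c 0 Set.univ Set.infinite_univ) ≤ T 0 :=
    fun m hm => hc 0 _ _ m hm
  have hAcs : ∀ k, ∃ cc : V, ∀ m ∈ (A k).1, floydDist G f b (s m) cc ≤ T k := by
    intro k
    cases k with
    | zero => exact ⟨_, hAc0⟩
    | succ k => exact ⟨_, fun m hm => hc (k + 1) (A k).1 (A k).2 m hm⟩
  have hAnested : ∀ i j : ℕ, i ≤ j → (A j).1 ⊆ (A i).1 := by
    intro i j hij
    induction j with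
    | zero => simpa [Nat.le_zero.mp hij]
    | succ j ih =>
      rcases Nat.lt_or_ge i (j + 1) with h | h
      · exact (hAsucc j).trans (ih (by omega))
      · have : i = j + 1 := by omega
        simp [this]
  -- extract a strictly monotone sequence through the chain
  have hgt : ∀ (k n : ℕ), ∃ m ∈ (A k).1, n < m := fun k n => (A k).2.exists_gt n
  choose gg hg1 hg2 using hgt
  let φ : ℕ → ℕ := fun k => Nat.rec (gg 0 0) (fun k ih => gg (k + 1) ih) k
  have hφmem : ∀ k, φ k ∈ (A k).1 := by
    intro k
    cases k with
    | zero => exact hg1 0 0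
    | succ k => exact hg1 (k + 1) _
  have hφmono : StrictMono φ := strictMono_nat_of_lt_succ fun k => hg2 (k + 1) (φ k)
  refine ⟨φ, hφmono, ?_⟩
  -- the subsequence is Cauchy
  intro ε hε
  have hTto : Tendsto T atTop (nhds 0) := by
    have := tendsto_sum_nat_add f
    refine this.congr fun i => ?_
    exact tsum_congr fun k => by rw [Nat.add_comm]
  have : ∀ᶠ i in atTop, |T i| < ε / 2 := by
    have := Metric.tendsto_atTop.mp hTto (ε / 2) (by linarith)
    obtain ⟨N, hN⟩ := this
    exact Filter.eventually_atTop.mpr ⟨N, fun n hn => by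
      have := hN n hn; rwa [Real.dist_eq, sub_zero] at this⟩
  obtain ⟨N, hN⟩ := Filter.eventually_atTop.mp this
  refine ⟨N, fun m n hm hn => ?_⟩
  obtain ⟨cc, hcc⟩ := hAcs N
  have hmem1 : φ m ∈ (A N).1 := hAnested N m hm (hφmem m)
  have hmem2 : φ n ∈ (A N).1 := hAnested N n hn (hφmem n)
  have h1 : floydDist G f b (s (φ m)) cc ≤ T N := hcc _ hmem1
  have h2 : floydDist G f b (s (φ n)) cc ≤ T N := hcc _ hmem2
  have h3 := floydDist_triangle hf.pos hconn (b := b) (s (φ m)) cc (s (φ n))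
  rw [floydDist_comm hf.pos hconn (b := b) cc (s (φ n))] at h3
  have hTN : |T N| < ε / 2 := hN N le_rfl
  have : T N < ε / 2 := (le_abs_self _).trans_lt hTN
  calc floydDist G f b ((s ∘ φ) m) ((s ∘ φ) n) ≤ _ + _ := h3
    _ < ε := by simpa using by linarith

end Aux

/-- Let `X` be a locally finite, infinite, connected graph with basepoint `b`, and let `f`
and `g` be Floyd functions with `g(n) ≤ f(n)` for all `n ≥ 1`. Then the Floyd distances
satisfy `d_g(u,v) ≤ d_f(u,v)` for all vertices `u, v`; and if `∂_f X` is trivial (has at most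
two points), then `∂_g X` is trivial as well. -/
theorem floyd_boundary_comparison
    {V : Type u} (G : SimpleGraph V) (hinf : Infinite V) (hconn : G.Connected)
    (hlf : ∀ v : V, (G.neighborSet v).Finite) (b : V)
    (f g : ℕ → ℝ) (hf : IsFloydFunction f) (hg : IsFloydFunction g)
    (hle : ∀ n : ℕ, 1 ≤ n → g n ≤ f n) :
    (∀ u v : V, floydDist G g b u v ≤ floydDist G f b u v) ∧
    (FloydBoundaryTrivial G f b → FloydBoundaryTrivial G g b) := by
  have hgle : ∀ n : ℕ, g n ≤ f n := by
    intro n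
    cases n with
    | zero => rw [hg.zero_eq, hf.zero_eq]; exact hle 1 le_rfl
    | succ n => exact hle (n + 1) (by omega)
  have hmono : ∀ u v : V, floydDist G g b u v ≤ floydDist G f b u v :=
    fun u v => floydDist_mono hg.pos hconn hgle u v
  refine ⟨hmono, ?_⟩
  intro htriv
  have hequiv : Equivalence (BoundaryRel G f b) := by
    constructor
    · intro t
      have h : (fun n => floydDist G f b (t.1 n) (t.1 n)) = fun _ => (0 : ℝ) :=
        funext fun n => floydDist_self hf.pos _
      unfold BoundaryRel
      rw [h]
      exact tendsto_const_nhds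
    · intro t t' h
      exact h.congr fun n => floydDist_comm hf.pos hconn _ _
    · intro t t' t'' h1 h2
      exact squeeze_zero (fun n => floydDist_nonneg hf.pos hconn _ _)
        (fun n => floydDist_triangle hf.pos hconn _ _ _) (by simpa using h1.add h2)
  have key : ∀ t : BoundarySeq G g b, ∃ t' : ℕ → V,
      (IsFloydCauchy G f b t' ∧ Escapes G b t') ∧
      (IsFloydCauchy G g b t' ∧ Escapes G b t') ∧
      Tendsto (fun n => floydDist G g b (t.1 n) (t' n)) atTop (nhds 0) := by
    rintro ⟨t, htC, htE⟩
    obtain ⟨φ, hφ, hC⟩ := exists_floydCauchy_subseq hf hconn hlf htE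
    have hEsc : Escapes G b (t ∘ φ) := by
      intro n
      obtain ⟨N, hN⟩ := htE n
      exact ⟨N, fun m hm => hN (φ m) (hm.trans hφ.le_apply)⟩
    have hgC : IsFloydCauchy G g b (t ∘ φ) := by
      intro ε hε
      obtain ⟨N, hN⟩ := htC ε hε
      exact ⟨N, fun m n hm hn =>
        hN (φ m) (φ n) (hm.trans hφ.le_apply) (hn.trans hφ.le_apply)⟩
    refine ⟨t ∘ φ, ⟨hC, hEsc⟩, ⟨hgC, hEsc⟩, ?_⟩
    refine tendsto_zero_aux _ (fun n => floydDist_nonneg hg.pos hconn _ _) ?_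
    intro ε hε
    obtain ⟨N, hN⟩ := htC ε hε
    exact ⟨N, fun n hn => hN n (φ n) hn (hn.trans hφ.le_apply)⟩
  have final : ∀ (aB bB : BoundarySeq G g b) (a' b' : ℕ → V)
      (haf : IsFloydCauchy G f b a') (hafE : Escapes G b a')
      (hag : IsFloydCauchy G g b a') (hagE : Escapes G b a')
      (hbf : IsFloydCauchy G f b b') (hbfE : Escapes G b b')
      (hbg : IsFloydCauchy G g b b') (hbgE : Escapes G b b'),
      BoundaryRel G g b aB (⟨a', hag, hagE⟩ : BoundarySeq G g b) →
      BoundaryRel G g b bB (⟨b', hbg, hbgE⟩ : BoundarySeq G g b) →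
      Quot.mk (BoundaryRel G f b) (⟨a', haf, hafE⟩ : BoundarySeq G f b) =
        Quot.mk (BoundaryRel G f b) (⟨b', hbf, hbfE⟩ : BoundarySeq G f b) →
      Quot.mk (BoundaryRel G g b) aB = Quot.mk (BoundaryRel G g b) bB := by
    intro aB bB a' b' haf hafE hag hagE hbf hbfE hbg hbgE harel hbrel heq
    have hfrel : BoundaryRel G f b (⟨a', haf, hafE⟩ : BoundarySeq G f b) ⟨b', hbf, hbfE⟩ :=
      hequiv.eqvGen_iff.mp (Quot.eqvGen_exact heq)
    have hgrel : BoundaryRel G g b (⟨a', hag, hagE⟩ : BoundarySeq G g b) ⟨b', hbg, hbgE⟩ :=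
      squeeze_zero (fun n => floydDist_nonneg hg.pos hconn _ _)
        (fun n => hmono _ _) hfrel
    have e1 : Quot.mk (BoundaryRel G g b) aB
        = Quot.mk (BoundaryRel G g b) (⟨a', hag, hagE⟩ : BoundarySeq G g b) :=
      Quot.sound harel
    have e2 : Quot.mk (BoundaryRel G g b) (⟨a', hag, hagE⟩ : BoundarySeq G g b)
        = Quot.mk (BoundaryRel G g b) (⟨b', hbg, hbgE⟩ : BoundarySeq G g b) :=
      Quot.sound hgrel
    have e3 : Quot.mk (BoundaryRel G g b) bB
        = Quot.mk (BoundaryRel G g b) (⟨b', hbg, hbgE⟩ : BoundarySeq G g b) :=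
      Quot.sound hbrel
    rw [e1, e2, e3]
  intro p q r
  induction p using Quot.ind with | _ sB => ?_
  induction q using Quot.ind with | _ tB => ?_
  induction r using Quot.ind with | _ uB => ?_
  obtain ⟨s', ⟨hsf, hsfE⟩, ⟨hsg, hsgE⟩, hsrel⟩ := key sB
  obtain ⟨t', ⟨htf, htfE⟩, ⟨htg, htgE⟩, htrel⟩ := key tB
  obtain ⟨u', ⟨huf, hufE⟩, ⟨hug, hugE⟩, hurel⟩ := key uB
  rcases htriv (Quot.mk _ (⟨s', hsf, hsfE⟩ : BoundarySeq G f b))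
      (Quot.mk _ ⟨t', htf, htfE⟩) (Quot.mk _ ⟨u', huf, hufE⟩) with h | h | h
  · exact Or.inl (final sB tB s' t' hsf hsfE hsg hsgE htf htfE htg htgE hsrel htrel h)
  · exact Or.inr (Or.inl
      (final sB uB s' u' hsf hsfE hsg hsgE huf hufE hug hugE hsrel hurel h))
  · exact Or.inr (Or.inr
      (final tB uB t' u' htf htfE htg htgE huf hufE hug hugE htrel hurel h))

end FloydPaper
end
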